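/- arXiv:1505.02267 — 2 statements merged into one kernel-verified Lean document; each statement's English description precedes it below -/
import Mathlib

section
/- Let a, b be bounded operators on a complex Hilbert space with polar decomposition b = ν|b|. Then |ab*| = ν ||a||b|| ν* and ν* |ab*| ν = ||a||b||. -/
/-!
Write `p = ν⋆ν` and `c = ||a||b||`. Then `c² = |b| a⋆a |b|` and `p` fixes `|b|`, so `p c² = c²`;
the C⋆-identity `‖(1 - p)c‖² = ‖(1 - p)c²(1 - p)⋆‖` upgrades this to `p c = c = c p`. Hence
`(ν c ν⋆)² = ν c² ν⋆ = (ab⋆)⋆(ab⋆)`, and `ν c ν⋆ ≥ 0` is the square root `|ab⋆|`;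
conjugating back by `ν` gives `ν⋆|ab⋆|ν = p c p = c`.
-/

/-- The absolute value `|y| = (y*y)^{1/2}` of a bounded operator. -/
noncomputable def opAbs {H : Type*} [NormedAddCommGroup H] [InnerProductSpace ℂ H]
    [CompleteSpace H] (y : H →L[ℂ] H) : H →L[ℂ] H := CFC.sqrt (star y * y)

/-- The `k`-th eigenvalue (in decreasing order, with multiplicity) of a positive compact
operator, via the Courant–Fischer min-max characterization. -/
noncomputable def sval {H : Type*} [NormedAddCommGroup H] [InnerProductSpace ℂ H]
    [CompleteSpace H] (x : H →L[ℂ] H) (k : ℕ) : ℝ :=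
  ⨅ F : {F : Submodule ℂ H // Module.finrank ℂ F = k},
    ⨆ ξ : {ξ : H // ξ ∈ (F : Submodule ℂ H)ᗮ ∧ ‖ξ‖ = 1},
      (inner ℂ (ξ : H) (x ξ) : ℂ).re

variable {H : Type*} [NormedAddCommGroup H] [InnerProductSpace ℂ H] [CompleteSpace H]

namespace CStarRing

theorem mul_eq_zero_of_mul_mul_star_self_eq_zero {E : Type*} [NonUnitalNormedRing E] [StarRing E]
    [CStarRing E] {q c : E} (h : q * (c * star c) = 0) : q * c = 0 := by
  rw [← mul_star_self_eq_zero_iff, star_mul, ← mul_assoc, mul_assoc q, h, zero_mul]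

theorem mul_eq_right_of_mul_mul_star_self_eq_right {E : Type*} [NormedRing E] [StarRing E]
    [CStarRing E] {p c : E} (h : p * (c * star c) = c * star c) : p * c = c := by
  rw [← sub_eq_zero, ← sub_one_mul] at h ⊢
  exact mul_eq_zero_of_mul_mul_star_self_eq_zero h

end CStarRing

namespace CFC

variable {A : Type*} [CStarAlgebra A] [PartialOrder A] [StarOrderedRing A]

theorem mul_abs_mul_eq_right_of_mul_star_eq_right {p x y : A} (h : p * star y = star y) :
    p * abs (x * y) = abs (x * y) := by
  apply CStarRing.mul_eq_right_of_mul_mul_star_self_eq_right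
  rw [(abs_nonneg _).isSelfAdjoint.star_eq, abs_mul_abs, star_mul, mul_assoc, ← mul_assoc p, h]

theorem abs_mul_star_of_polar {a b ν : A} (hpolar : b = ν * abs b)
    (hsupp : star ν * ν * abs b = abs b) :
    abs (a * star b) = ν * abs (abs a * abs b) * star ν ∧
      star ν * abs (a * star b) * ν = abs (abs a * abs b) := by
  set c := abs (abs a * abs b)
  set B := abs b
  have hB : IsSelfAdjoint B := (abs_nonneg b).isSelfAdjoint
  have hc : IsSelfAdjoint c := (abs_nonneg _).isSelfAdjoint
  have hpc : star ν * ν * c = c :=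
    mul_abs_mul_eq_right_of_mul_star_eq_right <| by rwa [hB.star_eq]
  have hcp : c * (star ν * ν) = c := by
    simpa only [star_mul, star_star, hc.star_eq] using congrArg star hpc
  have hsq : c * c = B * (star a * a) * B := by
    rw [abs_mul_abs, star_mul, hB.star_eq, (abs_nonneg a).isSelfAdjoint.star_eq, ← abs_mul_abs a]
    noncomm_ring
  have habs : abs (a * star b) = ν * c * star ν := by
    refine sqrt_unique ?_ (star_right_conjugate_nonneg (abs_nonneg _) ν)
    calc ν * c * star ν * (ν * c * star ν) = ν * (c * (star ν * ν)) * c * star ν := by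
          noncomm_ring
      _ = star (a * star b) * (a * star b) := by
        rw [hcp, mul_assoc ν, hsq, star_mul, star_star, hpolar, star_mul, hB.star_eq]
        noncomm_ring
  refine ⟨habs, ?_⟩
  calc star ν * abs (a * star b) * ν = star ν * ν * c * (star ν * ν) := by
        rw [habs]; noncomm_ring
    _ = c := by rw [hpc, hcp]

end CFC

theorem Submodule.starProjection_mul_of_range_le {𝕜 E : Type*} [RCLike 𝕜] [NormedAddCommGroup E]
    [InnerProductSpace 𝕜 E] {K : Submodule 𝕜 E} [K.HasOrthogonalProjection] {T : E →L[𝕜] E}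
    (h : LinearMap.range (T : E →ₗ[𝕜] E) ≤ K) : K.starProjection * T = T := by
  ext x
  exact starProjection_eq_self_iff.mpr (h ⟨x, rfl⟩)

theorem abs_mul_star (a b ν : H →L[ℂ] H) (hpolar : b = ν * opAbs b)
    (hinit : star ν * ν =
      ((LinearMap.range (opAbs b : H →ₗ[ℂ] H)).topologicalClosure).subtypeL.comp
        (Submodule.orthogonalProjectionOnto ((LinearMap.range (opAbs b : H →ₗ[ℂ] H)).topologicalClosure))) :
    opAbs (a * star b) = ν * opAbs (opAbs a * opAbs b) * star ν ∧
      star ν * opAbs (a * star b) * ν = opAbs (opAbs a * opAbs b) :=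
  -- `hinit` is `star ν * ν = K.starProjection` with the definition of `starProjection` unfolded.
  CFC.abs_mul_star_of_polar hpolar <| hinit ▸
    Submodule.starProjection_mul_of_range_le (Submodule.le_topologicalClosure _)
end

section
/- For compact operators a, b on a Hilbert space and each k, the k-th singular value of ab* equals the k-th singular value of |a||b|, i.e. λ_k(|ab*|) = λ_k(||a||b||). -/
variable {H : Type*} [NormedAddCommGroup H] [InnerProductSpace ℂ H] [CompleteSpace H]

/-! The min-max values of `|c*|` and `|c|` agree for every bounded operator `c`. Given `δ > 0`,
the contraction `w = c (c*c + δ²)^{-1/2}` satisfies `w |c| w* = f(cc*)` with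
`f t = √t · t / (t + δ²)`, because `c · g(c*c) = g(cc*) · c` for every continuous `g`
(true for polynomials, hence by Weierstrass approximation for all `g`); and `f(cc*)` is
within `δ` of `|c*| = √(cc*)`. Min-max values do not increase under conjugation by a
contraction and are `1`-Lipschitz in the operator norm, so `λ_k(|c*|) ≤ λ_k(|c|)`, and by
symmetry equality holds. The theorem follows from `|ab*| = |(b|a|)*|` and
`|b|a|| = |(|a||b|)*|`. -/

open Module

namespace Submodule

variable {K V : Type*} [DivisionRing K] [AddCommGroup V] [Module K V]

theorem exists_le_finrank_eq (W U : Submodule K V) [FiniteDimensional K W]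
    [FiniteDimensional K U] (hWU : finrank K W ≤ finrank K U) :
    ∃ W' : Submodule K V, W ≤ W' ∧ finrank K W' = finrank K U := by
  obtain ⟨d, hd⟩ := Nat.exists_eq_add_of_le hWU
  induction d generalizing W with
  | zero => exact ⟨W, le_rfl, hd.symm⟩
  | succ d ih =>
    obtain ⟨v, hvU, hvW⟩ : ∃ v ∈ U, v ∉ W := SetLike.not_le_iff_exists.mp fun hUW =>
      by have := finrank_mono hUW; omega
    have hv0 : v ≠ 0 := fun h => hvW (h ▸ W.zero_mem)
    have hrank : finrank K (W ⊔ K ∙ v : Submodule K V) = finrank K W + 1 := by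
      have := finrank_sup_add_finrank_inf_eq W (K ∙ v)
      rwa [(disjoint_span_singleton_of_notMem hvW).eq_bot, finrank_bot, add_zero,
        finrank_span_singleton hv0] at this
    obtain ⟨W', hle, hW'⟩ := ih (W ⊔ K ∙ v) (by omega) (by omega)
    exact ⟨W', le_sup_left.trans hle, hW'⟩

theorem exists_map_le_finrank_eq (f : V →ₗ[K] V) (F : Submodule K V) :
    ∃ F' : Submodule K V, F.map f ≤ F' ∧ finrank K F' = finrank K F := by
  by_cases hF : FiniteDimensional K F
  · exact exists_le_finrank_eq (F.map f) F (finrank_map_le f F)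
  · have hV : ¬ FiniteDimensional K V := fun _ => hF inferInstance
    refine ⟨⊤, le_top, ?_⟩
    rw [finrank_top, finrank_of_not_finite hV, finrank_of_not_finite hF]

end Submodule

section MinMax

variable {E : Type*} [NormedAddCommGroup E] [InnerProductSpace ℂ E]

noncomputable def rayleighSup (x : E →L[ℂ] E) (F : Submodule ℂ E) : ℝ :=
  ⨆ ξ : {ξ : E // ξ ∈ Fᗮ ∧ ‖ξ‖ = 1}, (inner ℂ (ξ : E) (x ξ) : ℂ).re

theorem sval_eq_iInf_rayleighSup [CompleteSpace E] (x : E →L[ℂ] E) (k : ℕ) :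
    sval x k = ⨅ F : {F : Submodule ℂ E // finrank ℂ F = k}, rayleighSup x F :=
  rfl

theorem abs_re_inner_apply_le (x : E →L[ℂ] E) (ξ : E) :
    |(inner ℂ ξ (x ξ) : ℂ).re| ≤ ‖x‖ * ‖ξ‖ ^ 2 :=
  calc |(inner ℂ ξ (x ξ) : ℂ).re| ≤ ‖ξ‖ * ‖x ξ‖ :=
        (Complex.abs_re_le_norm _).trans (norm_inner_le_norm _ _)
    _ ≤ ‖ξ‖ * (‖x‖ * ‖ξ‖) := by gcongr; exact x.le_opNorm ξ
    _ = ‖x‖ * ‖ξ‖ ^ 2 := by ring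

theorem abs_re_inner_apply_le_of_norm_eq_one (x : E →L[ℂ] E) {ξ : E} (hξ : ‖ξ‖ = 1) :
    |(inner ℂ ξ (x ξ) : ℂ).re| ≤ ‖x‖ := by
  simpa [hξ] using abs_re_inner_apply_le x ξ

theorem rayleighSup_bddAbove (x : E →L[ℂ] E) (F : Submodule ℂ E) :
    BddAbove (Set.range fun ξ : {ξ : E // ξ ∈ Fᗮ ∧ ‖ξ‖ = 1} => (inner ℂ (ξ : E) (x ξ) : ℂ).re) :=
  ⟨‖x‖, by
    rintro _ ⟨ξ, rfl⟩
    exact (abs_le.mp (abs_re_inner_apply_le_of_norm_eq_one x ξ.2.2)).2⟩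

theorem neg_norm_le_rayleighSup (x : E →L[ℂ] E) (F : Submodule ℂ E) :
    -‖x‖ ≤ rayleighSup x F := by
  rcases isEmpty_or_nonempty {ξ : E // ξ ∈ Fᗮ ∧ ‖ξ‖ = 1} with h | ⟨⟨ξ⟩⟩
  · simp [rayleighSup]
  · exact (abs_le.mp (abs_re_inner_apply_le_of_norm_eq_one x ξ.2.2)).1.trans
      (le_ciSup (rayleighSup_bddAbove x F) ξ)

theorem rayleighSup_nonneg [CompleteSpace E] {x : E →L[ℂ] E} (hx : 0 ≤ x) (F : Submodule ℂ E) :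
    0 ≤ rayleighSup x F :=
  Real.iSup_nonneg fun ξ => (Complex.nonneg_iff.mp
    (((ContinuousLinearMap.nonneg_iff_isPositive x).mp hx).inner_nonneg_right ξ)).1

theorem re_inner_apply_le_rayleighSup (x : E →L[ℂ] E) {F : Submodule ℂ E} {η : E}
    (hη : η ∈ Fᗮ) : (inner ℂ η (x η) : ℂ).re ≤ ‖η‖ ^ 2 * rayleighSup x F := by
  rcases eq_or_ne η 0 with rfl | hη0
  · simp
  have hr : 0 < ‖η‖ := norm_pos_iff.mpr hη0
  set ξ : E := ((‖η‖ : ℂ))⁻¹ • η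
  have hξ : ξ ∈ Fᗮ ∧ ‖ξ‖ = 1 := ⟨Fᗮ.smul_mem _ hη, by simp [ξ, norm_smul, hr.ne']⟩
  have hscale : (inner ℂ η (x η) : ℂ).re = ‖η‖ ^ 2 * (inner ℂ ξ (x ξ) : ℂ).re := by
    have hηξ : η = (‖η‖ : ℂ) • ξ := by simp [ξ, smul_smul, hr.ne']
    rw [hηξ, map_smul, inner_smul_left, inner_smul_right, Complex.conj_ofReal, ← mul_assoc,
      ← Complex.ofReal_mul, Complex.re_ofReal_mul, ← hηξ, sq]
  rw [hscale]
  gcongr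
  exact le_ciSup (rayleighSup_bddAbove x F) ⟨ξ, hξ⟩

theorem rayleighSup_le_add_norm_sub (x y : E →L[ℂ] E) (F : Submodule ℂ E) :
    rayleighSup x F ≤ rayleighSup y F + ‖x - y‖ := by
  rcases isEmpty_or_nonempty {ξ : E // ξ ∈ Fᗮ ∧ ‖ξ‖ = 1} with h | h
  · simp [rayleighSup]
  refine ciSup_le fun ξ => ?_
  have hsplit : (inner ℂ (ξ : E) (x ξ) : ℂ).re
      = (inner ℂ (ξ : E) (y ξ) : ℂ).re + (inner ℂ (ξ : E) ((x - y) ξ) : ℂ).re := by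
    simp
  rw [hsplit]
  gcongr
  · exact le_ciSup (rayleighSup_bddAbove y F) ξ
  · exact (abs_le.mp (abs_re_inner_apply_le_of_norm_eq_one (x - y) ξ.2.2)).2

theorem sval_le_add_norm_sub [CompleteSpace E] (x y : E →L[ℂ] E) (k : ℕ) :
    sval x k ≤ sval y k + ‖x - y‖ := by
  rcases isEmpty_or_nonempty {F : Submodule ℂ E // finrank ℂ F = k} with h | h
  · simp [sval_eq_iInf_rayleighSup]
  have hbdd : BddBelow (Set.range fun F : {F : Submodule ℂ E // finrank ℂ F = k} =>
      rayleighSup x F) := ⟨-‖x‖, by rintro _ ⟨F, rfl⟩; exact neg_norm_le_rayleighSup x F⟩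
  rw [← sub_le_iff_le_add, sval_eq_iInf_rayleighSup y]
  refine le_ciInf fun F => sub_le_iff_le_add.mpr ?_
  exact (ciInf_le hbdd F).trans (rayleighSup_le_add_norm_sub x y F)

theorem rayleighSup_conj_le [CompleteSpace E] {x : E →L[ℂ] E} (hx : 0 ≤ x) {w : E →L[ℂ] E}
    (hw : ‖w‖ ≤ 1) {F F' : Submodule ℂ E} (hFF' : F.map (w : E →ₗ[ℂ] E) ≤ F') :
    rayleighSup (w * x * star w) F' ≤ rayleighSup x F := by
  refine Real.iSup_le (fun ⟨ξ, hξF', hξ⟩ => ?_) (rayleighSup_nonneg hx F)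
  have hterm : (inner ℂ ξ ((w * x * star w) ξ) : ℂ) = inner ℂ (star w ξ) (x (star w ξ)) := by
    rw [ContinuousLinearMap.star_eq_adjoint, ContinuousLinearMap.adjoint_inner_left]
    rfl
  have hmem : star w ξ ∈ Fᗮ := by
    refine (Submodule.mem_orthogonal' _ _).mpr fun u hu => ?_
    rw [ContinuousLinearMap.star_eq_adjoint, ContinuousLinearMap.adjoint_inner_left]
    exact (Submodule.mem_orthogonal' _ _).mp hξF' _ (hFF' ⟨u, hu, rfl⟩)
  have hnorm : ‖star w ξ‖ ≤ 1 :=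
    calc ‖star w ξ‖ ≤ ‖star w‖ * ‖ξ‖ := (star w).le_opNorm ξ
      _ ≤ 1 := by rwa [norm_star, hξ, mul_one]
  calc (inner ℂ ξ ((w * x * star w) ξ) : ℂ).re
      ≤ ‖star w ξ‖ ^ 2 * rayleighSup x F := hterm ▸ re_inner_apply_le_rayleighSup x hmem
    _ ≤ 1 * rayleighSup x F := by
        gcongr
        · exact rayleighSup_nonneg hx F
        · exact pow_le_one₀ (norm_nonneg _) hnorm
    _ = rayleighSup x F := one_mul _

theorem sval_conj_le [CompleteSpace E] {x : E →L[ℂ] E} (hx : 0 ≤ x) {w : E →L[ℂ] E}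
    (hw : ‖w‖ ≤ 1) (k : ℕ) :
    sval (w * x * star w) k ≤ sval x k := by
  rcases isEmpty_or_nonempty {F : Submodule ℂ E // finrank ℂ F = k} with h | h
  · simp [sval_eq_iInf_rayleighSup]
  have hbdd : BddBelow (Set.range fun F : {F : Submodule ℂ E // finrank ℂ F = k} =>
      rayleighSup (w * x * star w) F) :=
    ⟨-‖w * x * star w‖, by rintro _ ⟨F, rfl⟩; exact neg_norm_le_rayleighSup _ F.1⟩
  refine le_ciInf fun ⟨F, hF⟩ => ?_
  obtain ⟨F', hFF', hF'⟩ := Submodule.exists_map_le_finrank_eq (w : E →ₗ[ℂ] E) F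
  exact ciInf_le_of_le hbdd ⟨F', hF'.trans hF⟩ (rayleighSup_conj_le hx hw hFF')

end MinMax

open Polynomial in
theorem SemiconjBy.aeval {R A : Type*} [CommSemiring R] [Semiring A] [Algebra R A]
    {x a b : A} (h : SemiconjBy x a b) (p : R[X]) :
    SemiconjBy x (aeval a p) (aeval b p) := by
  induction p using Polynomial.induction_on' with
  | add p q hp hq => simpa only [map_add] using hp.add_right hq
  | monomial n r =>
    simpa only [aeval_monomial] using
      SemiconjBy.mul_right (Algebra.commute_algebraMap_right r x) (h.pow_right n)

theorem abs_sqrt_sub_sqrt_mul_div_le {t δ : ℝ} (ht : 0 ≤ t) (hδ : 0 < δ) :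
    |√t - √t * t / (t + δ ^ 2)| ≤ δ := by
  have hpos : 0 < t + δ ^ 2 := by positivity
  have hdiff : √t - √t * t / (t + δ ^ 2) = √t * δ ^ 2 / (t + δ ^ 2) := by
    field_simp
    ring
  rw [hdiff, abs_of_nonneg (by positivity), div_le_iff₀ hpos]
  nth_rw 2 [← Real.sq_sqrt ht]
  nlinarith [sq_nonneg (√t - δ), Real.sqrt_nonneg t]

section CStarAlgebra

variable {A : Type*} [CStarAlgebra A] [PartialOrder A] [StarOrderedRing A]

open Filter Topology in
theorem SemiconjBy.cfc_of_nonneg {x a b : A} (h : SemiconjBy x a b) (ha : 0 ≤ a) (hb : 0 ≤ b)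
    {f : ℝ → ℝ} (hf : ContinuousOn f (Set.Ici 0)) :
    SemiconjBy x (cfc f a) (cfc f b) := by
  obtain ⟨M, hM⟩ : BddAbove (spectrum ℝ a ∪ spectrum ℝ b) :=
    ((ContinuousFunctionalCalculus.isCompact_spectrum a).union
      (ContinuousFunctionalCalculus.isCompact_spectrum b)).bddAbove
  choose p hp using fun n : ℕ => exists_polynomial_near_of_continuousOn 0 M f
    (hf.mono Set.Icc_subset_Ici_self) (1 / (n + 1)) Nat.one_div_pos_of_nat
  have hlim : ∀ c : A, 0 ≤ c → spectrum ℝ c ⊆ spectrum ℝ a ∪ spectrum ℝ b →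
      Tendsto (fun n => cfc (p n).eval c) atTop (𝓝 (cfc f c)) := by
    intro c hc hsub
    refine tendsto_cfc_fun (Metric.tendstoUniformlyOn_iff.mpr fun ε hε => ?_)
      (Eventually.of_forall fun n => (p n).continuousOn)
    obtain ⟨N, hN⟩ := exists_nat_one_div_lt hε
    filter_upwards [eventually_ge_atTop N] with n hn t ht
    rw [dist_comm, Real.dist_eq]
    exact ((hp n t ⟨spectrum_nonneg_of_nonneg hc ht, hM (hsub ht)⟩).trans_le
      (Nat.one_div_le_one_div hn)).trans hN
  have hpoly : ∀ n, x * cfc (p n).eval a = cfc (p n).eval b * x := fun n => by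
    rw [cfc_polynomial (p n) a, cfc_polynomial (p n) b]
    exact (h.aeval _).eq
  exact tendsto_nhds_unique ((hlim a ha Set.subset_union_left).const_mul x)
    (by simpa only [hpoly] using (hlim b hb Set.subset_union_right).mul_const x)

theorem CFC.abs_eq_cfc_sqrt (c : A) : CFC.abs c = cfc Real.sqrt (star c * c) := by
  rw [CFC.abs, CFC.sqrt_eq_real_sqrt _ (star_mul_self_nonneg c), cfcₙ_eq_cfc]

theorem norm_mul_cfc_star_mul_self_le_one (c : A) {g : ℝ → ℝ} (hg : ContinuousOn g (Set.Ici 0))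
    (hg1 : ∀ t : ℝ, 0 ≤ t → g t ^ 2 * t ≤ 1) :
    ‖c * cfc g (star c * c)‖ ≤ 1 := by
  have hXs : spectrum ℝ (star c * c) ⊆ Set.Ici 0 :=
    fun t ht => spectrum_nonneg_of_nonneg (star_mul_self_nonneg c) ht
  have hw : star (c * cfc g (star c * c)) * (c * cfc g (star c * c))
      = cfc (fun t => g t * t * g t) (star c * c) := by
    rw [cfc_mul (fun t => g t * t) g _ ((hg.mono hXs).mul continuousOn_id) (hg.mono hXs),
      cfc_mul g (fun t => t) _ (hg.mono hXs), cfc_id' ℝ (star c * c), star_mul,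
      IsSelfAdjoint.cfc.star_eq]
    simp only [mul_assoc]
  have hw1 : ‖star (c * cfc g (star c * c)) * (c * cfc g (star c * c))‖ ≤ 1 := by
    rw [hw]
    refine norm_cfc_le zero_le_one fun t ht => ?_
    have ht0 : 0 ≤ t := hXs ht
    rw [mul_right_comm, ← sq, Real.norm_eq_abs, abs_of_nonneg (by positivity)]
    exact hg1 t ht0
  rw [CStarRing.norm_star_mul_self] at hw1
  nlinarith [norm_nonneg (c * cfc g (star c * c))]

theorem mul_cfc_conj_abs_eq_cfc_mul_star_self (c : A) {g : ℝ → ℝ}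
    (hg : ContinuousOn g (Set.Ici 0)) :
    c * cfc g (star c * c) * CFC.abs c * star (c * cfc g (star c * c))
      = cfc (fun t => g t * √t * g t * t) (c * star c) := by
  have hXs : spectrum ℝ (star c * c) ⊆ Set.Ici 0 :=
    fun t ht => spectrum_nonneg_of_nonneg (star_mul_self_nonneg c) ht
  have hYs : spectrum ℝ (c * star c) ⊆ Set.Ici 0 :=
    fun t ht => spectrum_nonneg_of_nonneg (mul_star_self_nonneg c) ht
  have hk : ContinuousOn (fun t => g t * √t * g t) (Set.Ici 0) :=
    (hg.mul Real.continuous_sqrt.continuousOn).mul hg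
  calc c * cfc g (star c * c) * CFC.abs c * star (c * cfc g (star c * c))
      = c * cfc (fun t => g t * √t * g t) (star c * c) * star c := by
        rw [CFC.abs_eq_cfc_sqrt, star_mul, IsSelfAdjoint.cfc.star_eq,
          cfc_mul (fun t => g t * √t) g _ ((hg.mono hXs).mul (by fun_prop)) (hg.mono hXs),
          cfc_mul g Real.sqrt _ (hg.mono hXs)]
        simp only [mul_assoc]
    _ = cfc (fun t => g t * √t * g t) (c * star c) * (c * star c) := by
        rw [(SemiconjBy.cfc_of_nonneg (mul_assoc c (star c) c).symm (star_mul_self_nonneg c)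
          (mul_star_self_nonneg c) hk).eq, mul_assoc]
    _ = cfc (fun t => g t * √t * g t * t) (c * star c) := by
        rw [cfc_mul _ (fun t => t) _ (hk.mono hYs), cfc_id' ℝ (c * star c)]

theorem exists_norm_le_one_norm_abs_star_sub_conj_le (c : A) {δ : ℝ} (hδ : 0 < δ) :
    ∃ w : A, ‖w‖ ≤ 1 ∧ ‖CFC.abs (star c) - w * CFC.abs c * star w‖ ≤ δ := by
  set g : ℝ → ℝ := fun t => (√(t + δ ^ 2))⁻¹
  have hg : ContinuousOn g (Set.Ici 0) :=
    (Real.continuous_sqrt.comp_continuousOn (by fun_prop)).inv₀ fun t (ht : 0 ≤ t) =>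
      Real.sqrt_ne_zero'.mpr (by positivity)
  have hgg : ∀ t : ℝ, 0 ≤ t → g t ^ 2 = (t + δ ^ 2)⁻¹ := fun t ht => by
    rw [inv_pow, Real.sq_sqrt (by positivity)]
  refine ⟨c * cfc g (star c * c), norm_mul_cfc_star_mul_self_le_one c hg fun t ht => ?_, ?_⟩
  · rw [hgg t ht, inv_mul_le_one₀ (by positivity)]
    linarith [sq_nonneg δ]
  have hYs : spectrum ℝ (c * star c) ⊆ Set.Ici 0 :=
    fun t ht => spectrum_nonneg_of_nonneg (mul_star_self_nonneg c) ht
  rw [mul_cfc_conj_abs_eq_cfc_mul_star_self c hg, CFC.abs_eq_cfc_sqrt, star_star,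
    ← cfc_sub Real.sqrt (fun t => g t * √t * g t * t) (c * star c)
      Real.continuous_sqrt.continuousOn
      ((((hg.mul Real.continuous_sqrt.continuousOn).mul hg).mul continuousOn_id).mono hYs)]
  refine norm_cfc_le hδ.le fun t ht => ?_
  have ht0 : 0 ≤ t := hYs ht
  rw [mul_right_comm (g t), ← sq, hgg t ht0, Real.norm_eq_abs]
  convert abs_sqrt_sub_sqrt_mul_div_le ht0 hδ using 3
  ring

end CStarAlgebra

theorem sval_abs_star_le (c : H →L[ℂ] H) (k : ℕ) :
    sval (CFC.abs (star c)) k ≤ sval (CFC.abs c) k := by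
  refine le_of_forall_pos_le_add fun δ hδ => ?_
  obtain ⟨w, hw, hclose⟩ := exists_norm_le_one_norm_abs_star_sub_conj_le c hδ
  calc sval (CFC.abs (star c)) k
      ≤ sval (w * CFC.abs c * star w) k + ‖CFC.abs (star c) - w * CFC.abs c * star w‖ :=
        sval_le_add_norm_sub _ _ k
    _ ≤ sval (CFC.abs c) k + δ := add_le_add (sval_conj_le (CFC.abs_nonneg c) hw k) hclose

theorem sval_abs_star (c : H →L[ℂ] H) (k : ℕ) :
    sval (CFC.abs (star c)) k = sval (CFC.abs c) k :=
  (sval_abs_star_le c k).antisymm (by simpa using sval_abs_star_le (star c) k)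

theorem sval_abs_mul_star_general (a b : H →L[ℂ] H) (k : ℕ) :
    sval (opAbs (a * star b)) k = sval (opAbs (opAbs a * opAbs b)) k := by
  have hsa : ∀ x : H →L[ℂ] H, star (CFC.abs x) = CFC.abs x := fun x =>
    (CFC.abs_nonneg x).isSelfAdjoint.star_eq
  have h₁ : CFC.abs (a * star b) = CFC.abs (star (b * CFC.abs a)) := congrArg CFC.sqrt <| by
    simp only [star_star, star_mul, hsa, mul_assoc, ← mul_assoc (CFC.abs a), CFC.abs_mul_abs]
  have h₂ : CFC.abs (b * CFC.abs a) = CFC.abs (star (CFC.abs a * CFC.abs b)) :=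
    congrArg CFC.sqrt <| by
      simp only [star_mul, hsa, mul_assoc, ← mul_assoc (CFC.abs b), CFC.abs_mul_abs]
  change sval (CFC.abs (a * star b)) k = sval (CFC.abs (CFC.abs a * CFC.abs b)) k
  rw [h₁, sval_abs_star, h₂, sval_abs_star]

theorem sval_abs_mul_star (a b : H →L[ℂ] H) (ha : IsCompactOperator a)
    (hb : IsCompactOperator b) (k : ℕ) :
    sval (opAbs (a * star b)) k = sval (opAbs (opAbs a * opAbs b)) k :=
  sval_abs_mul_star_general a b k
end
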